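/- Let H be a real Hilbert space and (Ω, 𝒜, P) a probability space. Let J be a nonempty finite index set, let (λ_j)_{j∈J} be nonnegative reals with ∑_{j∈J} λ_j = 1, and for each j let F_j : H → ℝ be differentiable with β-Lipschitz gradient (β > 0). Let F = ∑_{j∈J} λ_j F_j, assume F is μ-strongly convex (μ > 0), and let w* be a minimizer of F. Let 0 < η ≤ 1/β, let w̄ ∈ H and (w_j)_{j∈J} ⊆ H, and set g = ∑_{j∈J} λ_j ∇F_j(w_j). Let n̄ : Ω → H be a random vector with E[‖n̄‖²] ≤ s² (s ≥ 0) and Bochner expectation E[n̄] = 0, and set W⁺ = w̄ − η(g + n̄). Assume F ∘ W⁺ is integrable. Then E[F(W⁺)] − F(w*) ≤ (1 − μη)(F(w̄) − F(w*)) + (ηβ²/2) ∑_{j∈J} λ_j ‖w̄ − w_j‖² + (η²β/2) s². -/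

import Mathlib

/-!
Write `h = ∇F(w̄)`. By the descent lemma for the `β`-smooth `F`,
`F(W⁺) ≤ F(w̄) - η⟪h, g + n̄⟫ + βη²/2 ‖g + n̄‖²`, and taking expectations the mean-zero noise
only contributes its second moment. Since `βη ≤ 1`,
`-η⟪h, g⟫ + βη²/2 ‖g‖² ≤ η/2 ‖g - h‖² - η/2 ‖h‖²`; the error `‖g - h‖²` is at most `β²` times
the weighted dispersion (Lipschitz gradients and Jensen), and strong convexity gives the
Polyak–Łojasiewicz inequality `‖h‖² ≥ 2μ (F(w̄) - F(w*))`.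
-/

open scoped BigOperators
open RealInnerProductSpace MeasureTheory

/-- `g` is the gradient of `f` at `x` (via the Riesz embedding into the dual). -/
def HasGradAt {H : Type*} [NormedAddCommGroup H] [InnerProductSpace ℝ H]
    (f : H → ℝ) (g x : H) : Prop :=
  HasFDerivAt f (InnerProductSpace.toDualMap ℝ H g) x

section Gradient

variable {H : Type*} [NormedAddCommGroup H] [InnerProductSpace ℝ H]

theorem HasGradAt.const_mul {f : H → ℝ} {g x : H} (hf : HasGradAt f g x) (c : ℝ) :
    HasGradAt (fun y => c * f y) (c • g) x := by
  unfold HasGradAt at *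
  rw [map_smul]
  exact hf.const_mul c

theorem HasGradAt.sum {ι : Type*} {t : Finset ι} {f : ι → H → ℝ} {g : ι → H} {x : H}
    (hf : ∀ j ∈ t, HasGradAt (f j) (g j) x) :
    HasGradAt (fun y => ∑ j ∈ t, f j y) (∑ j ∈ t, g j) x := by
  unfold HasGradAt at *
  rw [map_sum]
  exact HasFDerivAt.fun_sum hf

theorem HasGradAt.hasDerivAt_comp_line {f : H → ℝ} {g x d : H} {s : ℝ}
    (hf : HasGradAt f g (x + s • d)) :
    HasDerivAt (fun τ : ℝ => f (x + τ • d)) ⟪g, d⟫ s := by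
  have hline : HasDerivAt (fun τ : ℝ => x + τ • d) d s := by
    simpa using ((hasDerivAt_id s).smul_const d).const_add x
  have hf' : HasFDerivAt f (InnerProductSpace.toDualMap ℝ H g) (x + s • d) := hf
  have hcomp := hf'.comp_hasDerivAt s hline
  simp only [InnerProductSpace.toDualMap_apply_apply] at hcomp
  exact hcomp

theorem le_add_inner_add_of_lipschitz_grad {f : H → ℝ} {gf : H → H} {β : ℝ}
    (hgrad : ∀ x, HasGradAt f (gf x) x) (hlip : ∀ x y, ‖gf x - gf y‖ ≤ β * ‖x - y‖)
    (x y : H) : f y ≤ f x + ⟪gf x, y - x⟫ + β / 2 * ‖y - x‖ ^ 2 := by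
  set d := y - x with hd
  let ψ : ℝ → ℝ := fun τ => f (x + τ • d) - τ * ⟪gf x, d⟫ - β / 2 * ‖d‖ ^ 2 * τ ^ 2
  have hψ : ∀ τ, HasDerivAt ψ (⟪gf (x + τ • d) - gf x, d⟫ - β * ‖d‖ ^ 2 * τ) τ := by
    intro τ
    refine ((((hgrad _).hasDerivAt_comp_line).sub ((hasDerivAt_id τ).mul_const ⟪gf x, d⟫)).sub
      ((hasDerivAt_pow 2 τ).const_mul (β / 2 * ‖d‖ ^ 2))).congr_deriv ?_
    rw [inner_sub_left]
    simp only [one_mul, Nat.cast_ofNat]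
    ring
  have hψ_nonpos : ∀ τ, 0 ≤ τ → ⟪gf (x + τ • d) - gf x, d⟫ - β * ‖d‖ ^ 2 * τ ≤ 0 := by
    intro τ hτ
    have hgap := hlip (x + τ • d) x
    rw [add_sub_cancel_left, norm_smul, Real.norm_of_nonneg hτ] at hgap
    nlinarith [real_inner_le_norm (gf (x + τ • d) - gf x) d,
      mul_le_mul_of_nonneg_right hgap (norm_nonneg d)]
  have hanti : AntitoneOn ψ (Set.Ici 0) :=
    antitoneOn_of_hasDerivWithinAt_nonpos (convex_Ici 0)
      (fun τ _ => (hψ τ).continuousAt.continuousWithinAt)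
      (fun τ _ => (hψ τ).hasDerivWithinAt)
      (fun τ hτ => hψ_nonpos τ (interior_subset hτ))
  have h10 : ψ 1 ≤ ψ 0 := hanti Set.self_mem_Ici (Set.mem_Ici.2 zero_le_one) zero_le_one
  simp only [ψ, one_smul, zero_smul, add_zero, hd, add_sub_cancel] at h10
  linarith

end Gradient

section WeightedSum

variable {E : Type*} [SeminormedAddCommGroup E] [NormedSpace ℝ E]
  {ι : Type*} {t : Finset ι} {lam : ι → ℝ}

theorem norm_sum_smul_le (hlam : ∀ j ∈ t, 0 ≤ lam j) (u : ι → E) :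
    ‖∑ j ∈ t, lam j • u j‖ ≤ ∑ j ∈ t, lam j * ‖u j‖ :=
  (norm_sum_le _ _).trans_eq <| Finset.sum_congr rfl fun j hj => by
    rw [norm_smul, Real.norm_of_nonneg (hlam j hj)]

theorem sq_norm_sum_smul_le (hlam : ∀ j ∈ t, 0 ≤ lam j) (hsum : ∑ j ∈ t, lam j = 1)
    (u : ι → E) : ‖∑ j ∈ t, lam j • u j‖ ^ 2 ≤ ∑ j ∈ t, lam j * ‖u j‖ ^ 2 := by
  simpa only [smul_eq_mul, Pi.pow_apply] using
    ((convexOn_norm convex_univ).pow (fun _ _ => norm_nonneg _) 2).map_sum_le hlam hsum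
      (fun _ _ => Set.mem_univ (u _))

theorem norm_sum_smul_sub_sum_smul_le {G : ι → E → E} {β : ℝ}
    (hlam : ∀ j ∈ t, 0 ≤ lam j) (hsum : ∑ j ∈ t, lam j = 1)
    (hlip : ∀ j ∈ t, ∀ w₁ w₂, ‖G j w₁ - G j w₂‖ ≤ β * ‖w₁ - w₂‖) (w₁ w₂ : E) :
    ‖∑ j ∈ t, lam j • G j w₁ - ∑ j ∈ t, lam j • G j w₂‖ ≤ β * ‖w₁ - w₂‖ :=
  calc ‖∑ j ∈ t, lam j • G j w₁ - ∑ j ∈ t, lam j • G j w₂‖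
      = ‖∑ j ∈ t, lam j • (G j w₁ - G j w₂)‖ := by
        simp only [smul_sub, Finset.sum_sub_distrib]
    _ ≤ ∑ j ∈ t, lam j * (β * ‖w₁ - w₂‖) :=
        (norm_sum_smul_le hlam _).trans <| Finset.sum_le_sum fun j hj =>
          mul_le_mul_of_nonneg_left (hlip j hj w₁ w₂) (hlam j hj)
    _ = β * ‖w₁ - w₂‖ := by rw [← Finset.sum_mul, hsum, one_mul]

theorem sq_norm_sum_smul_sub_sum_smul_le {G : ι → E → E} {β : ℝ}
    (hlam : ∀ j ∈ t, 0 ≤ lam j) (hsum : ∑ j ∈ t, lam j = 1)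
    (hlip : ∀ j ∈ t, ∀ w₁ w₂, ‖G j w₁ - G j w₂‖ ≤ β * ‖w₁ - w₂‖) (w : ι → E) (v : E) :
    ‖∑ j ∈ t, lam j • G j (w j) - ∑ j ∈ t, lam j • G j v‖ ^ 2 ≤
      β ^ 2 * ∑ j ∈ t, lam j * ‖v - w j‖ ^ 2 :=
  calc ‖∑ j ∈ t, lam j • G j (w j) - ∑ j ∈ t, lam j • G j v‖ ^ 2
      = ‖∑ j ∈ t, lam j • (G j (w j) - G j v)‖ ^ 2 := by
        simp only [smul_sub, Finset.sum_sub_distrib]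
    _ ≤ ∑ j ∈ t, lam j * ‖G j (w j) - G j v‖ ^ 2 := sq_norm_sum_smul_le hlam hsum _
    _ ≤ ∑ j ∈ t, lam j * (β ^ 2 * ‖v - w j‖ ^ 2) := by
        refine Finset.sum_le_sum fun j hj => mul_le_mul_of_nonneg_left ?_ (hlam j hj)
        rw [← mul_pow, norm_sub_rev v]
        exact pow_le_pow_left₀ (norm_nonneg _) (hlip j hj _ _) 2
    _ = β ^ 2 * ∑ j ∈ t, lam j * ‖v - w j‖ ^ 2 := by
        rw [Finset.mul_sum]
        exact Finset.sum_congr rfl fun j _ => by ring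

end WeightedSum

section Quadratic

variable {H : Type*} [NormedAddCommGroup H] [InnerProductSpace ℝ H]

/-- Polyak–Łojasiewicz: minimise the left-hand side of `hab` over `‖v‖`. -/
theorem two_mul_sub_le_sq_norm_of_add_inner_add_le {μ a b : ℝ} (hμ : 0 < μ) {h v : H}
    (hab : a + ⟪h, v⟫ + μ / 2 * ‖v‖ ^ 2 ≤ b) : 2 * μ * (a - b) ≤ ‖h‖ ^ 2 := by
  nlinarith [sq_nonneg (μ * ‖v‖ - ‖h‖), neg_le_of_abs_le (abs_real_inner_le_norm h v)]

theorem neg_mul_inner_add_le_sub {β η : ℝ} (hη : 0 ≤ η) (hβη : η * β ≤ 1) (h g : H) :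
    -(η * ⟪h, g⟫) + β * η ^ 2 / 2 * ‖g‖ ^ 2 ≤ η / 2 * ‖g - h‖ ^ 2 - η / 2 * ‖h‖ ^ 2 := by
  rw [norm_sub_sq_real, real_inner_comm g h]
  nlinarith [mul_nonneg (mul_nonneg hη (sub_nonneg.2 hβη)) (sq_nonneg ‖g‖)]

end Quadratic

section Noise

variable {H : Type*} [NormedAddCommGroup H] [InnerProductSpace ℝ H] [CompleteSpace H]
  {Ω : Type*} [MeasurableSpace Ω] {P : Measure Ω} [IsProbabilityMeasure P] {n : Ω → H}

theorem integral_inner_const_add (hn : Integrable n P) (hmean : ∫ ω, n ω ∂P = 0) (c g : H) :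
    ∫ ω, ⟪c, g + n ω⟫ ∂P = ⟪c, g⟫ := by
  rw [integral_inner ((integrable_const g).fun_add hn), integral_add (integrable_const g) hn, hmean,
    integral_const, add_zero, probReal_univ, one_smul]

theorem integral_norm_const_add_sq (hn : MemLp n 2 P) (hmean : ∫ ω, n ω ∂P = 0) (g : H) :
    ∫ ω, ‖g + n ω‖ ^ 2 ∂P = ‖g‖ ^ 2 + ∫ ω, ‖n ω‖ ^ 2 ∂P := by
  have hn1 : Integrable n P := hn.integrable one_le_two
  have hcross : ∫ ω, 2 * ⟪g, n ω⟫ ∂P = 0 := by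
    rw [integral_const_mul, integral_inner hn1, hmean, inner_zero_right, mul_zero]
  simp_rw [norm_add_sq_real]
  rw [integral_add ((integrable_const _).fun_add ((hn1.const_inner g).const_mul 2))
      hn.norm.integrable_sq, integral_add (integrable_const _) ((hn1.const_inner g).const_mul 2),
    hcross, integral_const, probReal_univ, one_smul, add_zero]

theorem integral_comp_sub_smul_le {f : H → ℝ} {gf : H → H} {β : ℝ}
    (hgrad : ∀ x, HasGradAt f (gf x) x) (hlip : ∀ x y, ‖gf x - gf y‖ ≤ β * ‖x - y‖)
    (hn : MemLp n 2 P) (hmean : ∫ ω, n ω ∂P = 0) (x g : H) {η : ℝ} (hη : 0 ≤ η)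
    (hint : Integrable (fun ω => f (x - η • (g + n ω))) P) :
    ∫ ω, f (x - η • (g + n ω)) ∂P ≤
      f x - η * ⟪gf x, g⟫ + β * η ^ 2 / 2 * (‖g‖ ^ 2 + ∫ ω, ‖n ω‖ ^ 2 ∂P) := by
  have hpoint : ∀ ω, f (x - η • (g + n ω)) ≤
      f x - η * ⟪gf x, g + n ω⟫ + β * η ^ 2 / 2 * ‖g + n ω‖ ^ 2 := fun ω => by
    have hdesc := le_add_inner_add_of_lipschitz_grad hgrad hlip x (x - η • (g + n ω))
    rw [sub_sub_cancel_left, inner_neg_right, real_inner_smul_right, norm_neg, norm_smul,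
      Real.norm_of_nonneg hη] at hdesc
    linarith
  have hn1 : Integrable n P := hn.integrable one_le_two
  have hinner : Integrable (fun ω => ⟪gf x, g + n ω⟫) P :=
    ((integrable_const g).fun_add hn1).const_inner _
  have hsq : Integrable (fun ω => ‖g + n ω‖ ^ 2) P :=
    ((memLp_const g).add hn).norm.integrable_sq
  calc ∫ ω, f (x - η • (g + n ω)) ∂P
      ≤ ∫ ω, (f x - η * ⟪gf x, g + n ω⟫ + β * η ^ 2 / 2 * ‖g + n ω‖ ^ 2) ∂P :=
        integral_mono hint (((integrable_const (f x)).sub' (hinner.const_mul η)).add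
          (hsq.const_mul _)) hpoint
    _ = f x - η * ⟪gf x, g⟫ + β * η ^ 2 / 2 * (‖g‖ ^ 2 + ∫ ω, ‖n ω‖ ^ 2 ∂P) := by
        rw [integral_add ((integrable_const (f x)).sub' (hinner.const_mul η)) (hsq.const_mul _),
          integral_sub (integrable_const _) (hinner.const_mul η), integral_const_mul,
          integral_const_mul, integral_inner_const_add hn1 hmean, integral_norm_const_add_sq hn hmean,
          integral_const, probReal_univ, one_smul]

end Noise

theorem one_step_descent_sgd_general {H : Type*}
    [NormedAddCommGroup H] [InnerProductSpace ℝ H] [CompleteSpace H]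
    {Ω : Type*} [MeasurableSpace Ω] (P : Measure Ω) [IsProbabilityMeasure P]
    {ι : Type*} (t : Finset ι)
    (lam : ι → ℝ) (hlam : ∀ j ∈ t, 0 ≤ lam j) (hsum : ∑ j ∈ t, lam j = 1)
    (β : ℝ) (hβ : 0 < β)
    (F : ι → H → ℝ) (G : ι → H → H)
    (hgrad : ∀ j ∈ t, ∀ w, HasGradAt (F j) (G j w) w)
    (hlip : ∀ j ∈ t, ∀ w₁ w₂, ‖G j w₁ - G j w₂‖ ≤ β * ‖w₁ - w₂‖)
    (μ : ℝ) (hμ : 0 < μ)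
    (Ftot : H → ℝ) (hF : Ftot = fun w => ∑ j ∈ t, lam j * F j w)
    (Gtot : H → H) (hG : Gtot = fun w => ∑ j ∈ t, lam j • G j w)
    (hsc : ∀ w₁ w₂ : H,
      Ftot w₂ + ⟪Gtot w₂, w₁ - w₂⟫ + μ / 2 * ‖w₁ - w₂‖ ^ 2 ≤ Ftot w₁)
    (wstar : H)
    (η : ℝ) (hη0 : 0 < η) (hη : η ≤ 1 / β)
    (wbar : H) (w : ι → H)
    (g : H) (hg : g = ∑ j ∈ t, lam j • G j (w j))
    (s : ℝ)
    (nbar : Ω → H)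
    (hnL2 : MemLp nbar 2 P)
    (hnvar : ∫ ω, ‖nbar ω‖ ^ 2 ∂P ≤ s ^ 2)
    (hnmean : ∫ ω, nbar ω ∂P = 0)
    (Wplus : Ω → H) (hplus : Wplus = fun ω => wbar - η • (g + nbar ω))
    (hint : Integrable (fun ω => Ftot (Wplus ω)) P) :
    (∫ ω, Ftot (Wplus ω) ∂P) - Ftot wstar ≤
      (1 - μ * η) * (Ftot wbar - Ftot wstar)
        + η * β ^ 2 / 2 * ∑ j ∈ t, lam j * ‖wbar - w j‖ ^ 2
        + η ^ 2 * β / 2 * s ^ 2 := by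
  have hFgrad : ∀ x, HasGradAt Ftot (Gtot x) x := fun x => by
    rw [hF, hG]
    exact HasGradAt.sum fun j hj => (hgrad j hj x).const_mul (lam j)
  have hGlip : ∀ w₁ w₂, ‖Gtot w₁ - Gtot w₂‖ ≤ β * ‖w₁ - w₂‖ := fun w₁ w₂ => by
    rw [hG]
    exact norm_sum_smul_sub_sum_smul_le hlam hsum hlip w₁ w₂
  subst hplus
  have hstep := integral_comp_sub_smul_le hFgrad hGlip hnL2 hnmean wbar g hη0.le hint
  have hPL := two_mul_sub_le_sq_norm_of_add_inner_add_le hμ (hsc wstar wbar)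
  have hdisp : ‖g - Gtot wbar‖ ^ 2 ≤ β ^ 2 * ∑ j ∈ t, lam j * ‖wbar - w j‖ ^ 2 := by
    rw [hg, hG]
    exact sq_norm_sum_smul_sub_sum_smul_le hlam hsum hlip w wbar
  have hinexact := neg_mul_inner_add_le_sub hη0.le ((le_div_iff₀ hβ).1 hη) (Gtot wbar) g
  have hη2 : 0 ≤ η / 2 := by positivity
  linarith [mul_le_mul_of_nonneg_left hPL hη2, mul_le_mul_of_nonneg_left hdisp hη2,
    mul_le_mul_of_nonneg_left hnvar (by positivity : 0 ≤ β * η ^ 2 / 2)]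

/-- Conditional one-step bound of Theorem 1: an aggregated SGD step using the
exact weighted gradient at dispersed local models plus zero-mean noise with
second moment at most `s²` contracts the expected optimality gap by `(1 − μη)`
up to dispersion and noise penalty terms. -/
theorem one_step_descent_sgd {H : Type*}
    [NormedAddCommGroup H] [InnerProductSpace ℝ H] [CompleteSpace H]
    {Ω : Type*} [MeasurableSpace Ω] (P : Measure Ω) [IsProbabilityMeasure P]
    {ι : Type*} (t : Finset ι) (ht : t.Nonempty)
    (lam : ι → ℝ) (hlam : ∀ j ∈ t, 0 ≤ lam j) (hsum : ∑ j ∈ t, lam j = 1)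
    (β : ℝ) (hβ : 0 < β)
    (F : ι → H → ℝ) (G : ι → H → H)
    (hgrad : ∀ j ∈ t, ∀ w, HasGradAt (F j) (G j w) w)
    (hlip : ∀ j ∈ t, ∀ w₁ w₂, ‖G j w₁ - G j w₂‖ ≤ β * ‖w₁ - w₂‖)
    (μ : ℝ) (hμ : 0 < μ)
    (Ftot : H → ℝ) (hF : Ftot = fun w => ∑ j ∈ t, lam j * F j w)
    (Gtot : H → H) (hG : Gtot = fun w => ∑ j ∈ t, lam j • G j w)
    (hsc : ∀ w₁ w₂ : H,
      Ftot w₂ + ⟪Gtot w₂, w₁ - w₂⟫ + μ / 2 * ‖w₁ - w₂‖ ^ 2 ≤ Ftot w₁)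
    (wstar : H) (hmin : ∀ w, Ftot wstar ≤ Ftot w)
    (η : ℝ) (hη0 : 0 < η) (hη : η ≤ 1 / β)
    (wbar : H) (w : ι → H)
    (g : H) (hg : g = ∑ j ∈ t, lam j • G j (w j))
    (s : ℝ) (hs : 0 ≤ s)
    (nbar : Ω → H)
    (hnL2 : MemLp nbar 2 P)
    (hnvar : ∫ ω, ‖nbar ω‖ ^ 2 ∂P ≤ s ^ 2)
    (hnmean : ∫ ω, nbar ω ∂P = 0)
    (Wplus : Ω → H) (hplus : Wplus = fun ω => wbar - η • (g + nbar ω))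
    (hint : Integrable (fun ω => Ftot (Wplus ω)) P) :
    (∫ ω, Ftot (Wplus ω) ∂P) - Ftot wstar ≤
      (1 - μ * η) * (Ftot wbar - Ftot wstar)
        + η * β ^ 2 / 2 * ∑ j ∈ t, lam j * ‖wbar - w j‖ ^ 2
        + η ^ 2 * β / 2 * s ^ 2 :=
  one_step_descent_sgd_general P t lam hlam hsum β hβ F G hgrad hlip μ hμ Ftot hF Gtot hG hsc wstar
    η hη0 hη wbar w g hg s nbar hnL2 hnvar hnmean Wplus hplus hint
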